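/- arXiv:1811.02446 — 10 statements merged into one kernel-verified Lean document; each statement's English description precedes it below -/
import Mathlib

section
/- For any coalition C and any formula φ ∈ Φ, the formula K̄_C B_C φ → (φ → B_C φ) is a theorem of the system, i.e., ⊢ K̄_C B_C φ → (φ → B_C φ). -/
/-- Formulae of the language Φ: propositional variables, negation, implication,
distributed knowledge `know C φ` (K_C φ) and blameworthiness `blame C φ` (B_C φ),
together with a primitive falsum used to define the constants ⊥ and ⊤. -/
inductive Formula (A Prp : Type) : Type
  | var : Prp → Formula A Prp
  | bot : Formula A Prp
  | neg : Formula A Prp → Formula A Prp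
  | imp : Formula A Prp → Formula A Prp → Formula A Prp
  | know : Set A → Formula A Prp → Formula A Prp
  | blame : Set A → Formula A Prp → Formula A Prp

namespace Formula

variable {A Prp : Type}

def top : Formula A Prp := neg bot
def or (φ ψ : Formula A Prp) : Formula A Prp := imp (neg φ) ψ
def and (φ ψ : Formula A Prp) : Formula A Prp := neg (imp φ (neg ψ))
def iff (φ ψ : Formula A Prp) : Formula A Prp := and (imp φ ψ) (imp ψ φ)
/-- `K̄_C φ` is an abbreviation for `¬ K_C ¬ φ`. -/
def kbar (C : Set A) (φ : Formula A Prp) : Formula A Prp := neg (know C (neg φ))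

end Formula

/-- Truth-table evaluation treating `var`, `know` and `blame` formulae as atoms. -/
def evalF {A Prp : Type} (v : Formula A Prp → Prop) : Formula A Prp → Prop
  | .var p => v (.var p)
  | .bot => False
  | .neg φ => ¬ evalF v φ
  | .imp φ ψ => evalF v φ → evalF v ψ
  | .know C φ => v (.know C φ)
  | .blame C φ => v (.blame C φ)

/-- Propositional tautologies of the language Φ. -/
def Tautology {A Prp : Type} (φ : Formula A Prp) : Prop := ∀ v, evalF v φ

/-- Theorems of the logical system: ⊢ φ. -/
inductive Provable {A Prp : Type} : Formula A Prp → Prop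
  | taut {φ} : Tautology φ → Provable φ
  | truthK {C φ} : Provable (.imp (.know C φ) φ)
  | truthB {C φ} : Provable (.imp (.blame C φ) φ)
  | distr {C φ ψ} : Provable (.imp (.know C (.imp φ ψ)) (.imp (.know C φ) (.know C ψ)))
  | negIntro {C φ} : Provable (.imp (.neg (.know C φ)) (.know C (.neg (.know C φ))))
  | monoK {C D φ} (h : C ⊆ D) : Provable (.imp (.know C φ) (.know D φ))
  | monoB {C D φ} (h : C ⊆ D) : Provable (.imp (.blame C φ) (.blame D φ))
  | noneBlame {φ} : Provable (.neg (.blame (∅ : Set A) φ))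
  | blameTop {C} : Provable (.neg (.blame C Formula.top))
  | jointResp {C D φ ψ} (h : Disjoint C D) :
      Provable (.imp (.and (.kbar C (.blame C φ)) (.kbar D (.blame D ψ)))
        (.imp (.or φ ψ) (.blame (C ∪ D) (.or φ ψ))))
  | knownCause {C φ ψ} :
      Provable (.imp (.know C (.imp φ ψ)) (.imp (.blame C ψ) (.imp φ (.blame C φ))))
  | fairness {C φ} : Provable (.imp (.blame C φ) (.know C (.imp φ (.blame C φ))))
  | mp {φ ψ} : Provable (.imp φ ψ) → Provable φ → Provable ψ
  | nec {C φ} : Provable φ → Provable (.know C φ)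

/-- Derivability from hypotheses X using only Modus Ponens: X ⊢ φ. -/
inductive ProvableFrom {A Prp : Type} (X : Set (Formula A Prp)) : Formula A Prp → Prop
  | thm {φ} : Provable φ → ProvableFrom X φ
  | hyp {φ} : φ ∈ X → ProvableFrom X φ
  | mp {φ ψ} : ProvableFrom X (.imp φ ψ) → ProvableFrom X φ → ProvableFrom X ψ

/-- A set of formulae is consistent if X ⊬ ⊥. -/
def Consistent {A Prp : Type} (X : Set (Formula A Prp)) : Prop :=
  ¬ ProvableFrom X Formula.bot

namespace AltFairAux

variable {A Prp : Type}

lemma imp_trans {a b c : Formula A Prp} (h1 : Provable (.imp a b))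
    (h2 : Provable (.imp b c)) : Provable (.imp a c) := by
  refine Provable.mp (Provable.mp (Provable.taut ?_) h1) h2
  intro v; simp only [evalF]; tauto

lemma contrapose {a b : Formula A Prp} (h : Provable (.imp a b)) :
    Provable (.imp (.neg b) (.neg a)) := by
  refine Provable.mp (Provable.taut ?_) h
  intro v; simp only [evalF]; tauto

lemma kmono {C : Set A} {a b : Formula A Prp} (h : Provable (.imp a b)) :
    Provable (.imp (.know C a) (.know C b)) :=
  Provable.mp Provable.distr (Provable.nec h)

end AltFairAux

/-- ⊢ K̄_C B_C φ → (φ → B_C φ). -/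
theorem alt_fairness {A Prp : Type} (C : Set A) (φ : Formula A Prp) :
    Provable (Formula.imp (Formula.kbar C (Formula.blame C φ))
      (Formula.imp φ (Formula.blame C φ))) := by
  open AltFairAux in
  set ψ : Formula A Prp := .imp φ (.blame C φ) with hψ
  -- ⊢ ¬K_C ψ → ¬B_C φ
  have h1 : Provable (Formula.imp (.neg (.know C ψ)) (.neg (.blame C φ))) :=
    contrapose Provable.fairness
  -- ⊢ K_C ¬K_C ψ → K_C ¬B_C φ
  have h2 : Provable (Formula.imp (.know C (.neg (.know C ψ)))
      (.know C (.neg (.blame C φ)))) := kmono h1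
  -- ⊢ ¬K_C ψ → K_C ¬B_C φ
  have h3 : Provable (Formula.imp (.neg (.know C ψ))
      (.know C (.neg (.blame C φ)))) := imp_trans Provable.negIntro h2
  -- ⊢ ¬K_C ¬B_C φ → K_C ψ
  have h4 : Provable (Formula.imp (.neg (.know C (.neg (.blame C φ))))
      (.know C ψ)) := by
    refine Provable.mp (Provable.taut ?_) h3
    intro v; simp only [evalF]; tauto
  have h5 : Provable (Formula.imp (.know C ψ) ψ) := Provable.truthK
  exact imp_trans h4 h5
end

section
/- For any coalition C and any formulae φ, ψ ∈ Φ, if ⊢ φ ↔ ψ, then ⊢ B_C φ → B_C ψ. -/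
/-- If ⊢ φ ↔ ψ, then ⊢ B_C φ → B_C ψ. -/
theorem alt_cause {A Prp : Type} (C : Set A) (φ ψ : Formula A Prp)
    (h : Provable (Formula.iff φ ψ)) :
    Provable (Formula.imp (Formula.blame C φ) (Formula.blame C ψ)) := by
  have h1 : Provable (Formula.imp φ ψ) := by
    refine Provable.mp (Provable.taut ?_) h
    intro v; simp only [Formula.iff, Formula.and, evalF]; tauto
  have h2 : Provable (Formula.imp ψ φ) := by
    refine Provable.mp (Provable.taut ?_) h
    intro v; simp only [Formula.iff, Formula.and, evalF]; tauto
  have hK : Provable (Formula.know C (Formula.imp ψ φ)) := Provable.nec h2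
  have h3 : Provable (Formula.imp (Formula.blame C φ) (Formula.imp ψ (Formula.blame C ψ))) :=
    Provable.mp Provable.knownCause hK
  have h4 : Provable (Formula.imp (Formula.blame C φ) φ) := Provable.truthB
  have t : Tautology (Formula.imp (Formula.imp (Formula.blame C φ) (Formula.imp ψ (Formula.blame C ψ)))
      (Formula.imp (Formula.imp (Formula.blame C φ) φ)
      (Formula.imp (Formula.imp φ ψ)
      (Formula.imp (Formula.blame C φ) (Formula.blame C ψ))))) := by
    intro v; simp only [evalF]; tauto
  exact Provable.mp (Provable.mp (Provable.mp (Provable.taut t) h3) h4) h1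
end

section
/- For any integer n ≥ 0, any coalition C, any pairwise disjoint coalitions D_1, …, D_n with D_i ⊆ C for all i, and any formulae φ, χ_1, …, χ_n ∈ Φ, one has {K̄_{D_i} B_{D_i} χ_i : 1 ≤ i ≤ n}, K_C(φ → χ_1 ∨ … ∨ χ_n) ⊢ K_C(φ → B_C φ) (where the empty disjunction is ⊥ and parentheses in disjunctions are nested to the left). -/
/-- Disjunction of a list of formulae, with parentheses nested to the left and
the empty disjunction equal to ⊥. -/
def bigOr {A Prp : Type} : List (Formula A Prp) → Formula A Prp
  | [] => Formula.bot
  | χ :: rest => rest.foldl Formula.or χ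

/-!
Fold the disjunction χ₁ ∨ … ∨ χₙ from the left, maintaining `K_E(ψ → B_E ψ)` for the partial
disjunction `ψ` and the union `E` of the coalitions used so far. The first disjunct is Knowledge of
Fairness read contrapositively: `K̄_D B_D χ` yields `K_D(χ → B_D χ)`. To add a disjunct `χ` whose
coalition `D` is disjoint from `E`: if `K̄_E B_E ψ`, Joint Responsibility applies; otherwise
`K_E ¬B_E ψ`, so `E` knows `¬ψ`, and Blame for Known Cause passes the blame for `χ` on to `ψ ∨ χ`.
Both premises of this step are introspective, so it also holds under `K_{E ∪ D}`. Finally,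
Monotonicity moves the invariant to `C`, and Blame for Known Cause along `K_C(φ → χ₁ ∨ … ∨ χₙ)`
turns it into `K_C(φ → B_C φ)`.
-/

open Formula Function

variable {A Prp : Type}

namespace Provable

theorem of_taut {a b : Formula A Prp} (t : Tautology (a.imp b)) (ha : Provable a) :
    Provable b :=
  mp (taut t) ha

theorem of_taut₂ {a b c : Formula A Prp} (t : Tautology (a.imp (b.imp c))) (ha : Provable a)
    (hb : Provable b) : Provable c :=
  mp (of_taut t ha) hb

theorem of_taut₃ {a b c d : Formula A Prp} (t : Tautology (a.imp (b.imp (c.imp d))))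
    (ha : Provable a) (hb : Provable b) (hc : Provable c) : Provable d :=
  mp (of_taut₂ t ha hb) hc

theorem of_taut₄ {a b c d e : Formula A Prp} (t : Tautology (a.imp (b.imp (c.imp (d.imp e)))))
    (ha : Provable a) (hb : Provable b) (hc : Provable c) (hd : Provable d) : Provable e :=
  mp (of_taut₃ t ha hb hc) hd

theorem imp_trans {a b c : Formula A Prp} (hab : Provable (a.imp b)) (hbc : Provable (b.imp c)) :
    Provable (a.imp c) :=
  of_taut₂ (fun v => by simp only [evalF]; tauto) hab hbc

theorem know_imp {G : Set A} {a b : Formula A Prp} (h : Provable (a.imp b)) :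
    Provable ((know G a).imp (know G b)) :=
  mp distr (nec h)

theorem know_imp₂ {G : Set A} {a b c : Formula A Prp} (h : Provable (a.imp (b.imp c))) :
    Provable ((know G a).imp ((know G b).imp (know G c))) :=
  imp_trans (know_imp h) distr

theorem know_imp_know_know {C G : Set A} (hCG : C ⊆ G) (θ : Formula A Prp) :
    Provable ((know C θ).imp (know G (know C θ))) := by
  have hT : Provable ((know C (know C θ).neg).imp (know C θ).neg) := truthK
  have hN : Provable ((know C (know C θ).neg).neg.imp (know C (know C (know C θ).neg).neg)) :=
    negIntro
  have hK : Provable ((know C (know C (know C θ).neg).neg).imp (know C (know C θ))) :=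
    know_imp (of_taut (fun v => by simp only [evalF]; tauto) (negIntro (C := C) (φ := θ)))
  exact imp_trans (of_taut₃ (fun v => by simp only [evalF]; tauto) hT hN hK) (monoK hCG)

theorem kbar_imp_know_kbar {D G : Set A} (hDG : D ⊆ G) (θ : Formula A Prp) :
    Provable ((kbar D θ).imp (know G (kbar D θ))) :=
  imp_trans negIntro (monoK hDG)

theorem kbar_blame_imp_know (D : Set A) (χ : Formula A Prp) :
    Provable ((kbar D (blame D χ)).imp (know D (χ.imp (blame D χ)))) := by
  have h : Provable ((know D (χ.imp (blame D χ))).neg.imp (blame D χ).neg) :=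
    of_taut (fun v => by simp only [evalF]; tauto) fairness
  exact of_taut₂ (fun v => by simp only [evalF, kbar]; tauto) (know_imp h)
    (negIntro (C := D) (φ := χ.imp (blame D χ)))

theorem kbar_blame_imp_blame {D G : Set A} (hDG : D ⊆ G) (χ : Formula A Prp) :
    Provable ((kbar D (blame D χ)).imp (χ.imp (blame G χ))) :=
  of_taut₃ (fun v => by simp only [evalF]; tauto) (kbar_blame_imp_know D χ)
    (truthK (C := D) (φ := χ.imp (blame D χ))) (monoB hDG)

theorem know_not_imp_blame_or {E G : Set A} (hEG : E ⊆ G) (ψ χ : Formula A Prp) :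
    Provable ((know E ψ.neg).imp ((χ.imp (blame G χ)).imp
      ((ψ.or χ).imp (blame G (ψ.or χ))))) := by
  have h : Provable ((know E ψ.neg).imp (know G ((ψ.or χ).imp χ))) :=
    imp_trans (know_imp (taut fun v => by simp only [evalF, Formula.or]; tauto)) (monoK hEG)
  exact of_taut₃ (fun v => by simp only [evalF]; tauto) h knownCause truthK

theorem know_imp_blame_union {E D : Set A} (hED : Disjoint E D) (ψ χ : Formula A Prp) :
    Provable ((know E (ψ.imp (blame E ψ))).imp ((kbar D (blame D χ)).imp
      ((ψ.or χ).imp (blame (E ∪ D) (ψ.or χ))))) := by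
  have hE : Provable ((know E (ψ.imp (blame E ψ))).imp
      ((know E (blame E ψ).neg).imp (know E ψ.neg))) :=
    know_imp₂ (taut fun v => by simp only [evalF]; tauto)
  exact of_taut₄ (fun v => by simp only [evalF, Formula.and, kbar]; tauto)
    (jointResp (φ := ψ) (ψ := χ) hED) hE
    (know_not_imp_blame_or Set.subset_union_left ψ χ)
    (kbar_blame_imp_blame Set.subset_union_right χ)

theorem know_imp_blame_union_know {E D : Set A} (hED : Disjoint E D) (ψ χ : Formula A Prp) :
    Provable ((know E (ψ.imp (blame E ψ))).imp ((kbar D (blame D χ)).imp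
      (know (E ∪ D) ((ψ.or χ).imp (blame (E ∪ D) (ψ.or χ)))))) :=
  of_taut₃ (fun v => by simp only [evalF]; tauto) (know_imp₂ (know_imp_blame_union hED ψ χ))
    (know_imp_know_know Set.subset_union_left (ψ.imp (blame E ψ)))
    (kbar_imp_know_kbar Set.subset_union_right (blame D χ))

theorem know_imp_blame_mono {E C : Set A} (hEC : E ⊆ C) (ψ : Formula A Prp) :
    Provable ((know E (ψ.imp (blame E ψ))).imp (know C (ψ.imp (blame C ψ)))) :=
  imp_trans (monoK hEC) (know_imp (of_taut (fun v => by simp only [evalF]; tauto) (monoB hEC)))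

theorem know_imp_blame_of_know_imp (C : Set A) (φ ψ : Formula A Prp) :
    Provable ((know C (φ.imp ψ)).imp ((know C (ψ.imp (blame C ψ))).imp
      (know C (φ.imp (blame C φ))))) := by
  have h : Provable ((know C (φ.imp ψ)).imp ((ψ.imp (blame C ψ)).imp (φ.imp (blame C φ)))) :=
    of_taut₂ (fun v => by simp only [evalF]; tauto) truthK knownCause
  exact of_taut₂ (fun v => by simp only [evalF]; tauto) (know_imp₂ h)
    (know_imp_know_know subset_rfl _)

end Provable

namespace ProvableFrom

variable {X : Set (Formula A Prp)} {ι : Type*} (D : ι → Set A) (χ : ι → Formula A Prp)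

theorem know_imp_blame_foldl_or (l : List ι) {E : Set A} {ψ : Formula A Prp}
    (hl : l.Pairwise (Disjoint on D)) (hE : ∀ i ∈ l, Disjoint E (D i))
    (hX : ∀ i ∈ l, ProvableFrom X (kbar (D i) (blame (D i) (χ i))))
    (hψ : ProvableFrom X (know E (ψ.imp (blame E ψ)))) :
    ProvableFrom X (know (E ∪ ⋃ i ∈ l, D i)
      (((l.map χ).foldl Formula.or ψ).imp
        (blame (E ∪ ⋃ i ∈ l, D i) ((l.map χ).foldl Formula.or ψ)))) := by
  induction l generalizing E ψ with
  | nil => simpa using hψ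
  | cons i l ih =>
    obtain ⟨hil, hl⟩ := List.pairwise_cons.mp hl
    have hstep : ProvableFrom X (know (E ∪ D i) ((ψ.or (χ i)).imp
        (blame (E ∪ D i) (ψ.or (χ i))))) :=
      mp (mp (thm (Provable.know_imp_blame_union_know (hE i List.mem_cons_self) ψ (χ i))) hψ)
        (hX i List.mem_cons_self)
    have hU : E ∪ D i ∪ ⋃ j ∈ l, D j = E ∪ ⋃ j ∈ i :: l, D j := by simp [Set.union_assoc]
    rw [← hU]
    exact ih hl (fun j hj => (hE j (List.mem_cons_of_mem i hj)).union_left (hil j hj))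
      (fun j hj => hX j (List.mem_cons_of_mem i hj)) hstep

theorem know_imp_blame_bigOr (l : List ι) (hl : l.Pairwise (Disjoint on D))
    (hX : ∀ i ∈ l, ProvableFrom X (kbar (D i) (blame (D i) (χ i)))) :
    ProvableFrom X (know (⋃ i ∈ l, D i)
      ((bigOr (l.map χ)).imp (blame (⋃ i ∈ l, D i) (bigOr (l.map χ))))) := by
  cases l with
  | nil => exact thm (.nec (.taut fun v => by simp [evalF, bigOr]))
  | cons i l =>
    obtain ⟨hil, hl⟩ := List.pairwise_cons.mp hl
    have h := know_imp_blame_foldl_or D χ l hl hil (fun j hj => hX j (List.mem_cons_of_mem i hj))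
      (mp (thm (Provable.kbar_blame_imp_know (D i) (χ i))) (hX i List.mem_cons_self))
    rwa [show D i ∪ ⋃ j ∈ l, D j = ⋃ j ∈ i :: l, D j by simp] at h

end ProvableFrom

/-- {K̄_{Dᵢ} B_{Dᵢ} χᵢ : 1 ≤ i ≤ n}, K_C(φ → χ₁ ∨ … ∨ χₙ) ⊢ K_C(φ → B_C φ),
for pairwise disjoint D₁, …, Dₙ ⊆ C. -/
theorem five_plus_plus {A Prp : Type} (n : ℕ) (C : Set A) (D : Fin n → Set A)
    (hDC : ∀ i, D i ⊆ C) (hD : ∀ i j, i ≠ j → Disjoint (D i) (D j))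
    (φ : Formula A Prp) (χ : Fin n → Formula A Prp) :
    ProvableFrom
      (insert (Formula.know C (Formula.imp φ (bigOr (List.ofFn χ))))
        (Set.range fun i => Formula.kbar (D i) (Formula.blame (D i) (χ i))))
      (Formula.know C (Formula.imp φ (Formula.blame C φ))) := by
  have hpw : (List.finRange n).Pairwise (Disjoint on D) :=
    (List.nodup_finRange n).pairwise_of_forall_ne fun i _ j _ hij => hD i j hij
  refine .mp (.mp (.thm (Provable.know_imp_blame_of_know_imp C φ _)) (.hyp (Set.mem_insert _ _)))
    (.mp (.thm (Provable.know_imp_blame_mono (E := ⋃ i ∈ List.finRange n, D i)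
      (Set.iUnion₂_subset fun i _ => hDC i) _)) ?_)
  rw [List.ofFn_eq_map]
  exact ProvableFrom.know_imp_blame_bigOr D χ _ hpw
    fun i _ => .hyp (Set.mem_insert_of_mem _ ⟨i, rfl⟩)
end

section
/- Soundness of the None to Blame axiom: For any game (I, {∼_a}_{a∈A}, Δ, Ω, P, π), any play (α, δ, ω) ∈ P, and any formula φ ∈ Φ, it is not the case that (α, δ, ω) ⊩ B_∅ φ. -/
/-- A strategic game with imperfect information. -/
structure Game (A Prp : Type) where
  I : Type                                -- initial states
  sim : A → I → I → Prop                  -- indistinguishability relations ∼_a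
  sim_equiv : ∀ a, Equivalence (sim a)
  Act : Type                              -- actions Δ
  act_nonempty : Nonempty Act
  Out : Type                              -- outcomes Ω
  P : Set (I × (A → Act) × Out)           -- plays
  play_exists : ∀ (α : I) (δ : A → Act), ∃ ω : Out, (α, δ, ω) ∈ P
  π : Prp → Set (I × (A → Act) × Out)
  π_sub : ∀ p, π p ⊆ P

/-- `α ∼_C α'`: indistinguishability by every member of the coalition C. -/
def Game.simC {A Prp : Type} (G : Game A Prp) (C : Set A) (α α' : G.I) : Prop :=
  ∀ a ∈ C, G.sim a α α'

/-- Satisfaction relation `(α, δ, ω) ⊩ φ`. -/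
def Sat {A Prp : Type} (G : Game A Prp) :
    Formula A Prp → G.I × (A → G.Act) × G.Out → Prop
  | .var p, pl => pl ∈ G.π p
  | .bot, _ => False
  | .neg φ, pl => ¬ Sat G φ pl
  | .imp φ ψ, pl => Sat G φ pl → Sat G ψ pl
  | .know C φ, pl => ∀ pl' ∈ G.P, G.simC C pl.1 pl'.1 → Sat G φ pl'
  | .blame C φ, pl => Sat G φ pl ∧
      ∃ s : C → G.Act, ∀ pl' ∈ G.P, G.simC C pl.1 pl'.1 →
        (∀ a : C, s a = pl'.2.1 a.1) → ¬ Sat G φ pl'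

/-- Soundness of the None to Blame axiom: (α, δ, ω) ⊮ B_∅ φ. -/
theorem none_to_blame_sound {A Prp : Type} (G : Game A Prp)
    (pl : G.I × (A → G.Act) × G.Out) (hpl : pl ∈ G.P) (φ : Formula A Prp) :
    ¬ Sat G (Formula.blame (∅ : Set A) φ) pl := by
  rintro ⟨hφ, s, hs⟩
  exact hs pl hpl (fun a ha => absurd ha (Set.notMem_empty a))
    (fun a => absurd a.2 (Set.notMem_empty a.1)) hφ
end

section
/- Soundness of the Joint Responsibility axiom: For any game (I, {∼_a}_{a∈A}, Δ, Ω, P, π), any play (α, δ, ω) ∈ P, any disjoint coalitions C and D, and any formulae φ, ψ ∈ Φ, if (α, δ, ω) ⊩ K̄_C B_C φ, (α, δ, ω) ⊩ K̄_D B_D ψ, and (α, δ, ω) ⊩ φ ∨ ψ, then (α, δ, ω) ⊩ B_{C∪D}(φ ∨ ψ). -/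
open Classical in
/-- Soundness of the Joint Responsibility axiom. -/
theorem joint_responsibility_sound {A Prp : Type} (G : Game A Prp)
    (pl : G.I × (A → G.Act) × G.Out) (hpl : pl ∈ G.P)
    (C D : Set A) (hCD : Disjoint C D) (φ ψ : Formula A Prp)
    (h1 : Sat G (Formula.kbar C (Formula.blame C φ)) pl)
    (h2 : Sat G (Formula.kbar D (Formula.blame D ψ)) pl)
    (h3 : Sat G (Formula.or φ ψ) pl) :
    Sat G (Formula.blame (C ∪ D) (Formula.or φ ψ)) pl := by

  simp only [Formula.kbar, Sat, not_forall] at h1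
  simp only [Formula.kbar, Sat, not_forall] at h2
  push_neg at h1 h2
  obtain ⟨plC, hplCP, hsimC, hφC, sC, hsC⟩ := h1
  obtain ⟨plD, hplDP, hsimD, hψD, sD, hsD⟩ := h2
  refine ⟨h3, ?_⟩
  refine ⟨fun a => if h : (a : A) ∈ C then sC ⟨a, h⟩ else sD ⟨a, (a.2.resolve_left h)⟩, ?_⟩
  intro pl' hpl' hsim hmatch hsat
  have hCpl' : G.simC C plC.1 pl'.1 := fun a ha =>
    (G.sim_equiv a).trans ((G.sim_equiv a).symm (hsimC a ha)) (hsim a (Or.inl ha))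
  have hDpl' : G.simC D plD.1 pl'.1 := fun a ha =>
    (G.sim_equiv a).trans ((G.sim_equiv a).symm (hsimD a ha)) (hsim a (Or.inr ha))
  have hnφ : ¬ Sat G φ pl' := by
    refine hsC pl' hpl' hCpl' ?_
    intro a
    have := hmatch ⟨a.1, Or.inl a.2⟩
    simpa [a.2] using this
  have hnψ : ¬ Sat G ψ pl' := by
    refine hsD pl' hpl' hDpl' ?_
    intro a
    have := hmatch ⟨a.1, Or.inr a.2⟩
    have haC : (a : A) ∉ C := fun hc => hCD.ne_of_mem hc a.2 rfl
    simpa [haC] using this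
  exact hnψ (hsat hnφ)
end

section
/- Soundness of the Blame for Known Cause axiom: For any game (I, {∼_a}_{a∈A}, Δ, Ω, P, π), any play (α, δ, ω) ∈ P, any coalition C, and any formulae φ, ψ ∈ Φ, if (α, δ, ω) ⊩ K_C(φ → ψ), (α, δ, ω) ⊩ B_C ψ, and (α, δ, ω) ⊩ φ, then (α, δ, ω) ⊩ B_C φ. -/
/-- Soundness of the Blame for Known Cause axiom. -/
theorem blame_for_known_cause_sound {A Prp : Type} (G : Game A Prp)
    (pl : G.I × (A → G.Act) × G.Out) (hpl : pl ∈ G.P)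
    (C : Set A) (φ ψ : Formula A Prp)
    (h1 : Sat G (Formula.know C (Formula.imp φ ψ)) pl)
    (h2 : Sat G (Formula.blame C ψ) pl)
    (h3 : Sat G φ pl) :
    Sat G (Formula.blame C φ) pl := by
  obtain ⟨hψ, s, hs⟩ := h2
  refine ⟨h3, s, fun pl' hpl' hsim hmatch hφ' => ?_⟩
  exact hs pl' hpl' hsim hmatch (h1 pl' hpl' hsim hφ')
end

section
/- Soundness of the Knowledge of Fairness axiom: For any game (I, {∼_a}_{a∈A}, Δ, Ω, P, π), any play (α, δ, ω) ∈ P, any coalition C, and any formula φ ∈ Φ, if (α, δ, ω) ⊩ B_C φ, then (α, δ, ω) ⊩ K_C(φ → B_C φ). -/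
/-- Soundness of the Knowledge of Fairness axiom. -/
theorem knowledge_of_fairness_sound {A Prp : Type} (G : Game A Prp)
    (pl : G.I × (A → G.Act) × G.Out) (hpl : pl ∈ G.P)
    (C : Set A) (φ : Formula A Prp)
    (h : Sat G (Formula.blame C φ) pl) :
    Sat G (Formula.know C (Formula.imp φ (Formula.blame C φ))) pl := by
  obtain ⟨hφ, s, hs⟩ := h
  intro pl' hpl' hsim hφ'
  refine ⟨hφ', s, ?_⟩
  intro pl'' hpl'' hsim' hmatch
  exact hs pl'' hpl'' (fun a ha => (G.sim_equiv a).trans (hsim a ha) (hsim' a ha)) hmatch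
end

section
/- Edge transport lemma for the canonical game: For any maximal consistent set X_0, any formula φ ∈ Φ, any n ≥ 0, any outcome X_0, C_1, X_1, C_2, …, X_n, C_{n+1}, X_{n+1} of the canonical game G(X_0), and any coalition D ⊆ C_{n+1}, K_D φ ∈ X_n if and only if K_D φ ∈ X_{n+1}. -/
/-- Maximal consistent set of formulae. -/
def MaxCons {A Prp : Type} (X : Set (Formula A Prp)) : Prop :=
  Consistent X ∧ ∀ Y, Consistent Y → X ⊆ Y → Y = X

/-- A valid chain `C₁, X₁, …, Cₙ, Xₙ` extending a set `X`: each `Xᵢ` is maximal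
consistent and `{φ | K_{Cᵢ} φ ∈ X_{i-1}} ⊆ Xᵢ`. -/
def ValidChain {A Prp : Type} :
    Set (Formula A Prp) → List (Set A × Set (Formula A Prp)) → Prop
  | _, [] => True
  | X, (C, Y) :: rest =>
      MaxCons Y ∧ (∀ φ, Formula.know C φ ∈ X → φ ∈ Y) ∧ ValidChain Y rest

/-- Outcomes of the canonical game `G(X₀)`: the sequences `X₀, C₁, X₁, …, Cₙ, Xₙ`. -/
def COutcome {A Prp : Type} (X₀ : Set (Formula A Prp)) :=
  {l : List (Set A × Set (Formula A Prp)) // ValidChain X₀ l}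

/-- `hd ω`: the last maximal consistent set of the sequence ω. -/
def hd {A Prp : Type} (X₀ : Set (Formula A Prp)) (ω : COutcome X₀) :
    Set (Formula A Prp) :=
  (ω.1.map Prod.snd).getLastD X₀

/-- `ω ∼_a ω'`: every edge along the unique path between the tree nodes ω and ω'
is labeled with agent a (equivalently, after removing a common prefix, every
coalition label remaining in either sequence contains a). -/
def simOut {A Prp : Type} (X₀ : Set (Formula A Prp)) (a : A) (ω ω' : COutcome X₀) : Prop :=
  ∃ ρ t₁ t₂, ω.1 = ρ ++ t₁ ∧ ω'.1 = ρ ++ t₂ ∧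
    (∀ st ∈ t₁, a ∈ st.1) ∧ (∀ st ∈ t₂, a ∈ st.1)

/-- `ω ∼_C ω'`. -/
def simOutC {A Prp : Type} (X₀ : Set (Formula A Prp)) (C : Set A)
    (ω ω' : COutcome X₀) : Prop :=
  ∀ a ∈ C, simOut X₀ a ω ω'

/-- Initial states of the canonical game: equivalence classes Ω/∼_𝒜. -/
def CanonI {A Prp : Type} (X₀ : Set (Formula A Prp)) :=
  Quot (fun ω ω' : COutcome X₀ => ∀ a : A, simOut X₀ a ω ω')

/-- `α ∼_C α'` on initial states. -/
def simIC {A Prp : Type} (X₀ : Set (Formula A Prp)) (C : Set A)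
    (α α' : CanonI X₀) : Prop :=
  ∃ ω ω' : COutcome X₀, Quot.mk _ ω = α ∧ Quot.mk _ ω' = α' ∧ simOutC X₀ C ω ω'

/-- Plays of the canonical game `G(X₀)`: triples `(α, δ, ω)` such that `ω ∈ α` and
for every formula `K̄_C B_C ψ ∈ hd(ω)`, if `δ(a) = ψ` for each `a ∈ C`, then
`¬ψ ∈ hd(ω)`. The set of actions is Δ = Φ. -/
def CanonP {A Prp : Type} (X₀ : Set (Formula A Prp)) :
    Set (CanonI X₀ × (A → Formula A Prp) × COutcome X₀) :=
  {t | Quot.mk _ t.2.2 = t.1 ∧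
    ∀ (C : Set A) (ψ : Formula A Prp),
      Formula.kbar C (Formula.blame C ψ) ∈ hd X₀ t.2.2 →
      (∀ a ∈ C, t.2.1 a = ψ) → Formula.neg ψ ∈ hd X₀ t.2.2}

section Aux
variable {A Prp : Type}


theorem tautK (a b : Formula A Prp) : Tautology (b.imp (a.imp b)) := by
  intro v; simp only [evalF]; tauto
theorem tautI (a : Formula A Prp) : Tautology (a.imp a) := by
  intro v; simp only [evalF]; tauto
theorem tautS (a b c : Formula A Prp) :
    Tautology ((a.imp (b.imp c)).imp ((a.imp b).imp (a.imp c))) := by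
  intro v; simp only [evalF]; tauto
theorem tautDNE' (a : Formula A Prp) :
    Tautology (((Formula.neg a).imp Formula.bot).imp a) := by
  intro v; simp only [evalF]; tauto
theorem tautDNE (a : Formula A Prp) :
    Tautology ((Formula.neg (Formula.neg a)).imp a) := by
  intro v; simp only [evalF]; tauto
theorem tautDNI (a : Formula A Prp) :
    Tautology (a.imp (Formula.neg (Formula.neg a))) := by
  intro v; simp only [evalF]; tauto
theorem tautAbsurd (a : Formula A Prp) :
    Tautology ((Formula.neg a).imp (a.imp Formula.bot)) := by
  intro v; simp only [evalF]; tauto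
theorem tautTrans (a b c : Formula A Prp) :
    Tautology ((a.imp b).imp ((b.imp c).imp (a.imp c))) := by
  intro v; simp only [evalF]; tauto
theorem tautContra (a b : Formula A Prp) :
    Tautology ((a.imp b).imp ((Formula.neg b).imp (Formula.neg a))) := by
  intro v; simp only [evalF]; tauto

theorem deduction {X : Set (Formula A Prp)} {α φ : Formula A Prp}
    (h : ProvableFrom (insert α X) φ) : ProvableFrom X (α.imp φ) := by
  induction h with
  | @thm ψ hψ =>
      exact .mp (.thm (.taut (tautK _ _))) (.thm hψ)
  | @hyp ψ hψ =>
      rcases Set.mem_insert_iff.mp hψ with rfl | hψ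
      · exact .thm (.taut (tautI _))
      · exact .mp (.thm (.taut (tautK _ _))) (.hyp hψ)
  | @mp ψ χ _ _ ih1 ih2 =>
      exact .mp (.mp (.thm (.taut (tautS _ _ _))) ih1) ih2

theorem mcs_closed {X : Set (Formula A Prp)} (hX : MaxCons X) {φ : Formula A Prp}
    (h : ProvableFrom X φ) : φ ∈ X := by
  have hcons : Consistent (insert φ X) := fun hbot => hX.1 (.mp (deduction hbot) h)
  have := hX.2 _ hcons (Set.subset_insert _ _)
  rw [← this]; exact Set.mem_insert _ _

theorem mcs_mp {X : Set (Formula A Prp)} (hX : MaxCons X) {φ ψ : Formula A Prp}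
    (hp : Provable (φ.imp ψ)) (hφ : φ ∈ X) : ψ ∈ X :=
  mcs_closed hX (.mp (.thm hp) (.hyp hφ))

theorem mcs_neg {X : Set (Formula A Prp)} (hX : MaxCons X) {φ : Formula A Prp}
    (h : φ ∉ X) : Formula.neg φ ∈ X := by
  have hcons : Consistent (insert (Formula.neg φ) X) := by
    intro hbot
    have hd : ProvableFrom X ((Formula.neg φ).imp Formula.bot) := deduction hbot
    have : ProvableFrom X φ :=
      .mp (.thm (.taut (tautDNE' _))) hd
    exact h (mcs_closed hX this)
  have := hX.2 _ hcons (Set.subset_insert _ _)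
  rw [← this]; exact Set.mem_insert _ _

theorem mcs_not_both {X : Set (Formula A Prp)} (hX : MaxCons X) {φ : Formula A Prp}
    (h1 : φ ∈ X) (h2 : Formula.neg φ ∈ X) : False :=
  hX.1 (.mp (.mp (.thm (.taut (tautAbsurd _))) (.hyp h2)) (.hyp h1))

theorem imp_trans {a b c : Formula A Prp} (h1 : Provable (a.imp b))
    (h2 : Provable (b.imp c)) : Provable (a.imp c) :=
  .mp (.mp (.taut (tautTrans _ _ _)) h1) h2

theorem contrapos {a b : Formula A Prp} (h : Provable (a.imp b)) :
    Provable ((Formula.neg b).imp (Formula.neg a)) :=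
  .mp (.taut (tautContra _ _)) h

/-- Positive introspection: `⊢ K_D φ → K_D K_D φ`. -/
theorem posIntro {D : Set A} {φ : Formula A Prp} :
    Provable ((Formula.know D φ).imp (Formula.know D (Formula.know D φ))) := by
  set Kφ := Formula.know D φ with hK
  -- Kφ → ¬K¬Kφ
  have step1 : Provable (Kφ.imp (Formula.neg (Formula.know D (Formula.neg Kφ)))) :=
    imp_trans (.taut (tautDNI _)) (contrapos .truthK)
  -- ¬K¬Kφ → K¬K¬Kφ
  have step2 : Provable ((Formula.neg (Formula.know D (Formula.neg Kφ))).imp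
      (Formula.know D (Formula.neg (Formula.know D (Formula.neg Kφ))))) := .negIntro
  -- ¬K¬Kφ → Kφ  (contrapositive of 5, with double-negation elimination)
  have inner : Provable ((Formula.neg (Formula.know D (Formula.neg Kφ))).imp Kφ) :=
    imp_trans (contrapos .negIntro) (.taut (tautDNE _))
  -- K¬K¬Kφ → KKφ
  have step3 : Provable ((Formula.know D (Formula.neg (Formula.know D (Formula.neg Kφ)))).imp
      (Formula.know D Kφ)) := .mp .distr (.nec inner)
  exact imp_trans step1 (imp_trans step2 step3)

theorem chain_last {X₀ : Set (Formula A Prp)} (hX₀ : MaxCons X₀)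
    {l : List (Set A × Set (Formula A Prp))} (h : ValidChain X₀ l) :
    MaxCons ((l.map Prod.snd).getLastD X₀) := by
  induction l generalizing X₀ with
  | nil => exact hX₀
  | cons p rest ih =>
      obtain ⟨c, y⟩ := p
      simp only [List.map_cons, List.getLastD_cons]
      exact ih h.1 h.2.2

theorem chain_append {X₀ : Set (Formula A Prp)} {l : List (Set A × Set (Formula A Prp))}
    {C : Set A} {X : Set (Formula A Prp)} (h : ValidChain X₀ (l ++ [(C, X)])) :
    MaxCons X ∧ (∀ ψ, Formula.know C ψ ∈ (l.map Prod.snd).getLastD X₀ → ψ ∈ X) ∧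
      ValidChain X₀ l := by
  induction l generalizing X₀ with
  | nil => exact ⟨h.1, h.2.1, trivial⟩
  | cons p rest ih =>
      obtain ⟨c, y⟩ := p
      obtain ⟨h1, h2, h3⟩ := ih h.2.2
      refine ⟨h1, ?_, h.1, h.2.1, h3⟩
      simp only [List.map_cons, List.getLastD_cons]
      exact h2

end Aux

/-- Edge transport lemma for the canonical game: for an outcome
X₀, C₁, X₁, …, Xₙ, C_{n+1}, X_{n+1} and a coalition D ⊆ C_{n+1},
K_D φ ∈ Xₙ iff K_D φ ∈ X_{n+1}. -/
theorem edge_transport {A Prp : Type} (X₀ : Set (Formula A Prp)) (hX₀ : MaxCons X₀)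
    (l : List (Set A × Set (Formula A Prp))) (C : Set A) (X : Set (Formula A Prp))
    (h : ValidChain X₀ (l ++ [(C, X)])) (D : Set A) (hD : D ⊆ C)
    (φ : Formula A Prp) :
    Formula.know D φ ∈ (l.map Prod.snd).getLastD X₀ ↔ Formula.know D φ ∈ X := by
  obtain ⟨hXmc, hstep, hchain⟩ := chain_append h
  have hY : MaxCons ((l.map Prod.snd).getLastD X₀) := chain_last hX₀ hchain
  constructor
  · intro hK
    have h1 : Formula.know D (Formula.know D φ) ∈ (l.map Prod.snd).getLastD X₀ :=
      mcs_mp hY posIntro hK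
    have h2 : Formula.know C (Formula.know D φ) ∈ (l.map Prod.snd).getLastD X₀ :=
      mcs_mp hY (.monoK hD) h1
    exact hstep _ h2
  · intro hK
    by_contra hn
    have h0 : Formula.neg (Formula.know D φ) ∈ (l.map Prod.snd).getLastD X₀ :=
      mcs_neg hY hn
    have h1 : Formula.know D (Formula.neg (Formula.know D φ)) ∈ (l.map Prod.snd).getLastD X₀ :=
      mcs_mp hY .negIntro h0
    have h2 : Formula.know C (Formula.neg (Formula.know D φ)) ∈ (l.map Prod.snd).getLastD X₀ :=
      mcs_mp hY (.monoK hD) h1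
    exact mcs_not_both hXmc hK (hstep _ h2)
end

section
/- Existence of preventing extensions in the canonical game: For any maximal consistent set X_0, any play (α, δ, ω) ∈ P of the canonical game G(X_0), any coalition C, any action profile s ∈ Δ^C, and any formula with ¬(φ → B_C φ) ∈ hd(ω), there is a play (α', δ', ω') ∈ P such that α ∼_C α', s =_C δ', and φ ∈ hd(ω'). -/
/-!
Write `X = hd ω`. The new outcome extends `ω` by a `C`-edge to a maximal consistent `Y` that
contains `φ`, every `χ` with `K_C χ ∈ X`, and `¬ψ` for every action `ψ` that some `D ⊆ C`, all of
whose members play `ψ`, could be blamed for (`K̄_D B_D ψ ∈ X`); the coalitions chosen for distinct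
`ψ` are disjoint. If no such `Y` existed, `K_C (φ → ψ₁ ∨ … ∨ ψₙ) ∈ X`. Joint Responsibility, applied
one disjunct at a time, shows that the union `E ⊆ C` of the chosen coalitions satisfies
`K_E (Ψ → B_E Ψ)` for `Ψ = ψ₁ ∨ … ∨ ψₙ`. Hence `Ψ`, `B_E Ψ` and `B_C Ψ` lie in `X`, and Blame for
Known Cause puts `φ → B_C φ` into `X`, a contradiction. The play condition at `Y` holds because the
canonical relation for `K_D` is an equivalence, so `K̄_D B_D ψ` transfers from `Y` back to `X`, and
a coalition with a member outside `C` plays `⊤`, for which no one can be blamed.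
-/

open Function

variable {A Prp : Type}

theorem evalF_foldr_or (v : Formula A Prp → Prop) (l : List (Formula A Prp)) (θ : Formula A Prp) :
    evalF v (l.foldr Formula.or θ) ↔ (∃ ψ ∈ l, evalF v ψ) ∨ evalF v θ := by
  induction l with
  | nil => simp
  | cons ψ l ih =>
    simp only [List.foldr_cons, Formula.or, evalF, ih, List.mem_cons, exists_eq_or_imp]
    rw [or_assoc]
    exact or_iff_not_imp_left.symm

namespace ProvableFrom

variable {X : Set (Formula A Prp)} {φ ψ : Formula A Prp}

theorem mono {Y : Set (Formula A Prp)} (hXY : X ⊆ Y) (h : ProvableFrom X φ) :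
    ProvableFrom Y φ := by
  induction h with
  | thm h => exact .thm h
  | hyp h => exact .hyp (hXY h)
  | mp _ _ ih₁ ih₂ => exact .mp ih₁ ih₂

theorem deduction (h : ProvableFrom (insert φ X) ψ) : ProvableFrom X (φ.imp ψ) := by
  induction h with
  | thm h => exact .mp (.thm (.taut fun v => by simp only [evalF]; tauto)) (.thm h)
  | hyp h =>
    rcases h with rfl | h
    · exact .thm (.taut fun v => by simp only [evalF]; tauto)
    · exact .mp (.thm (.taut fun v => by simp only [evalF]; tauto)) (.hyp h)
  | mp _ _ ih₁ ih₂ =>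
    exact .mp (.mp (.thm (.taut fun v => by simp only [evalF]; tauto)) ih₁) ih₂

theorem exists_mem_of_isChain {c : Set (Set (Formula A Prp))} (hc : IsChain (· ⊆ ·) c)
    (hne : c.Nonempty) (h : ProvableFrom (⋃₀ c) φ) : ∃ W ∈ c, ProvableFrom W φ := by
  induction h with
  | thm h => exact ⟨hne.some, hne.some_mem, .thm h⟩
  | hyp h =>
    obtain ⟨W, hW, hφ⟩ := h
    exact ⟨W, hW, .hyp hφ⟩
  | mp _ _ ih₁ ih₂ =>
    obtain ⟨W₁, hW₁, h₁⟩ := ih₁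
    obtain ⟨W₂, hW₂, h₂⟩ := ih₂
    rcases hc.total hW₁ hW₂ with h₁₂ | h₂₁
    · exact ⟨W₂, hW₂, .mp (h₁.mono h₁₂) h₂⟩
    · exact ⟨W₁, hW₁, .mp h₁ (h₂.mono h₂₁)⟩

-- `l.foldr Formula.or φ` is `¬ψ₁ → ⋯ → ¬ψₙ → φ`, i.e. the hypotheses `¬ψᵢ` discharged.
theorem exists_foldr_or_of_union_neg {S : Set (Formula A Prp)}
    (h : ProvableFrom (X ∪ Formula.neg '' S) φ) :
    ∃ l : List (Formula A Prp), l.Nodup ∧ (∀ ψ ∈ l, ψ ∈ S) ∧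
      ProvableFrom X (l.foldr Formula.or φ) := by
  classical
  induction h with
  | thm h => exact ⟨[], List.nodup_nil, by simp, .thm h⟩
  | hyp h =>
    rcases h with h | ⟨ψ, hψ, rfl⟩
    · exact ⟨[], List.nodup_nil, by simp, .hyp h⟩
    · exact ⟨[ψ], List.nodup_singleton ψ, by simpa using hψ,
        .thm (.taut fun v => by simp only [List.foldr, Formula.or, evalF]; tauto)⟩
  | mp _ _ ih₁ ih₂ =>
    obtain ⟨l₁, -, hS₁, h₁⟩ := ih₁
    obtain ⟨l₂, hl₂, hS₂, h₂⟩ := ih₂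
    refine ⟨l₁ ∪ l₂, hl₂.union l₁, fun ψ hψ => ?_, .mp (.mp (.thm (.taut fun v => ?_)) h₁) h₂⟩
    · rcases List.mem_union_iff.1 hψ with hψ | hψ
      exacts [hS₁ ψ hψ, hS₂ ψ hψ]
    · simp only [evalF, evalF_foldr_or, List.mem_union_iff]
      grind

end ProvableFrom

theorem Consistent.exists_maxCons_superset {X : Set (Formula A Prp)} (h : Consistent X) :
    ∃ Y, X ⊆ Y ∧ MaxCons Y := by
  obtain ⟨Y, hXY, hY⟩ := zorn_subset_nonempty {Y | Consistent Y}
    (fun c hcS hc hne => ⟨⋃₀ c, fun hbot => by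
      obtain ⟨W, hW, hWbot⟩ := hbot.exists_mem_of_isChain hc hne
      exact hcS hW hWbot, fun _ => Set.subset_sUnion_of_mem⟩) X h
  exact ⟨Y, hXY, hY.prop, fun Z hZ hYZ => (hY.eq_of_subset hZ hYZ).symm⟩

namespace MaxCons

variable {X : Set (Formula A Prp)} {C D : Set A} {φ ψ : Formula A Prp}

theorem mem_of_provableFrom (hX : MaxCons X) (h : ProvableFrom X φ) : φ ∈ X := by
  have hcons : Consistent (insert φ X) := fun hbot => hX.1 (.mp hbot.deduction h)
  exact hX.2 _ hcons (Set.subset_insert φ X) ▸ Set.mem_insert φ X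

theorem mem_of_provable (hX : MaxCons X) (h : Provable φ) : φ ∈ X :=
  hX.mem_of_provableFrom (.thm h)

theorem mp_mem (hX : MaxCons X) (h : φ.imp ψ ∈ X) (hφ : φ ∈ X) : ψ ∈ X :=
  hX.mem_of_provableFrom (.mp (.hyp h) (.hyp hφ))

theorem neg_mem_iff (hX : MaxCons X) : φ.neg ∈ X ↔ φ ∉ X := by
  refine ⟨fun hn hφ => hX.1 (.mp (.mp (.thm (.taut fun v => ?_)) (.hyp hφ)) (.hyp hn)), fun hφ => ?_⟩
  · simp only [evalF]
    tauto
  have hincons : ¬Consistent (insert φ X) := fun hc =>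
    hφ (hX.2 _ hc (Set.subset_insert φ X) ▸ Set.mem_insert φ X)
  exact hX.mem_of_provableFrom
    (.mp (.thm (.taut fun v => by simp only [evalF]; tauto)) (not_not.1 hincons).deduction)

theorem imp_mem_iff (hX : MaxCons X) : φ.imp ψ ∈ X ↔ (φ ∈ X → ψ ∈ X) := by
  refine ⟨hX.mp_mem, fun h => ?_⟩
  by_cases hφ : φ ∈ X
  · exact hX.mp_mem (hX.mem_of_provable (.taut fun v => by simp only [evalF]; tauto)) (h hφ)
  · exact hX.mp_mem (hX.mem_of_provable (.taut fun v => by simp only [evalF]; tauto))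
      (hX.neg_mem_iff.2 hφ)

theorem or_mem_iff (hX : MaxCons X) : φ.or ψ ∈ X ↔ φ ∈ X ∨ ψ ∈ X := by
  rw [Formula.or, hX.imp_mem_iff, hX.neg_mem_iff, or_iff_not_imp_left]

theorem and_mem_iff (hX : MaxCons X) : φ.and ψ ∈ X ↔ φ ∈ X ∧ ψ ∈ X := by
  rw [Formula.and, hX.neg_mem_iff, hX.imp_mem_iff, hX.neg_mem_iff]
  tauto

theorem kbar_mem_iff (hX : MaxCons X) : Formula.kbar C φ ∈ X ↔ Formula.know C φ.neg ∉ X :=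
  hX.neg_mem_iff

theorem mem_of_know_mem (hX : MaxCons X) (h : Formula.know C φ ∈ X) : φ ∈ X :=
  hX.mp_mem (hX.mem_of_provable .truthK) h

theorem know_mem_of_subset (hX : MaxCons X) (hCD : C ⊆ D) (h : Formula.know C φ ∈ X) :
    Formula.know D φ ∈ X :=
  hX.mp_mem (hX.mem_of_provable (.monoK hCD)) h

theorem blame_mem_of_subset (hX : MaxCons X) (hCD : C ⊆ D) (h : Formula.blame C φ ∈ X) :
    Formula.blame D φ ∈ X :=
  hX.mp_mem (hX.mem_of_provable (.monoB hCD)) h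

theorem know_neg_know_mem (hX : MaxCons X) (h : Formula.know C φ ∉ X) :
    Formula.know C (Formula.know C φ).neg ∈ X :=
  hX.mp_mem (hX.mem_of_provable .negIntro) (hX.neg_mem_iff.2 h)

theorem blame_mem_of_know_imp (hX : MaxCons X) (hK : Formula.know C (φ.imp ψ) ∈ X)
    (hψ : Formula.blame C ψ ∈ X) (hφ : φ ∈ X) : Formula.blame C φ ∈ X :=
  hX.mp_mem (hX.mp_mem (hX.mp_mem (hX.mem_of_provable .knownCause) hK) hψ) hφ

theorem know_mem_of_provableFrom (hX : MaxCons X)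
    (h : ProvableFrom {χ | Formula.know C χ ∈ X} φ) : Formula.know C φ ∈ X := by
  induction h with
  | thm h => exact hX.mem_of_provable h.nec
  | hyp h => exact h
  | mp _ _ ih₁ ih₂ => exact hX.mp_mem (hX.mp_mem (hX.mem_of_provable .distr) ih₁) ih₂

end MaxCons

def KSucc (C : Set A) (X Y : Set (Formula A Prp)) : Prop :=
  ∀ φ, Formula.know C φ ∈ X → φ ∈ Y

namespace MaxCons

variable {X : Set (Formula A Prp)} {C : Set A} {φ : Formula A Prp}

theorem kSucc_refl (hX : MaxCons X) : KSucc C X X :=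
  fun _ => hX.mem_of_know_mem

theorem exists_kSucc_not_mem (hX : MaxCons X) (h : Formula.know C φ ∉ X) :
    ∃ Y, MaxCons Y ∧ KSucc C X Y ∧ φ ∉ Y := by
  have hcons : Consistent (insert φ.neg {χ | Formula.know C χ ∈ X}) := fun hbot =>
    h (hX.know_mem_of_provableFrom
      (.mp (.thm (.taut fun v => by simp only [evalF]; tauto)) hbot.deduction))
  obtain ⟨Y, hsub, hY⟩ := hcons.exists_maxCons_superset
  exact ⟨Y, hY, fun χ hχ => hsub (Or.inr hχ), hY.neg_mem_iff.1 (hsub (Or.inl rfl))⟩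

theorem know_mem_iff (hX : MaxCons X) :
    Formula.know C φ ∈ X ↔ ∀ Y, MaxCons Y → KSucc C X Y → φ ∈ Y := by
  refine ⟨fun h Y _ hXY => hXY φ h, fun h => ?_⟩
  by_contra hφ
  obtain ⟨Y, hY, hXY, hφY⟩ := hX.exists_kSucc_not_mem hφ
  exact hφY (h Y hY hXY)

end MaxCons

namespace KSucc

variable {X Y : Set (Formula A Prp)} {C D : Set A} {φ : Formula A Prp}

theorem mono (hX : MaxCons X) (hDC : D ⊆ C) (h : KSucc C X Y) : KSucc D X Y :=
  fun φ hφ => h φ (hX.know_mem_of_subset hDC hφ)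

theorem symm (hX : MaxCons X) (hY : MaxCons Y) (h : KSucc C X Y) : KSucc C Y X := by
  intro φ hφ
  by_contra hφX
  have hK : Formula.know C φ ∉ X := fun hK => hφX (hX.mem_of_know_mem hK)
  exact hY.neg_mem_iff.1 (h _ (hX.know_neg_know_mem hK)) hφ

theorem know_mem (hX : MaxCons X) (hY : MaxCons Y) (h : KSucc C X Y)
    (hφ : Formula.know C φ ∈ X) : Formula.know C φ ∈ Y := by
  by_contra hφY
  exact hX.neg_mem_iff.1 (h.symm hX hY _ (hY.know_neg_know_mem hφY)) hφ

theorem know_mem_iff (hX : MaxCons X) (hY : MaxCons Y) (h : KSucc C X Y) :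
    Formula.know C φ ∈ X ↔ Formula.know C φ ∈ Y :=
  ⟨h.know_mem hX hY, (h.symm hX hY).know_mem hY hX⟩

theorem kbar_mem_iff (hX : MaxCons X) (hY : MaxCons Y) (h : KSucc C X Y) :
    Formula.kbar C φ ∈ X ↔ Formula.kbar C φ ∈ Y := by
  rw [hX.kbar_mem_iff, hY.kbar_mem_iff, h.know_mem_iff hX hY]

end KSucc

namespace MaxCons

variable {X : Set (Formula A Prp)} {C D E : Set A} {φ ψ Ψ : Formula A Prp}

theorem know_fair_of_kbar_blame (hX : MaxCons X)
    (h : Formula.kbar C (Formula.blame C φ) ∈ X) :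
    Formula.know C (φ.imp (Formula.blame C φ)) ∈ X := by
  obtain ⟨Y, hY, hXY, hB⟩ := hX.exists_kSucc_not_mem (hX.kbar_mem_iff.1 h)
  rw [hY.neg_mem_iff, not_not] at hB
  exact (hXY.know_mem_iff hX hY).2 (hY.mp_mem (hY.mem_of_provable .fairness) hB)

theorem blame_mem_of_kbar_blame (hX : MaxCons X)
    (h : Formula.kbar C (Formula.blame C φ) ∈ X) (hφ : φ ∈ X) : Formula.blame C φ ∈ X :=
  hX.mp_mem (hX.mem_of_know_mem (hX.know_fair_of_kbar_blame h)) hφ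

theorem know_fair_or (hX : MaxCons X) (hDE : Disjoint D E)
    (hψ : Formula.kbar D (Formula.blame D ψ) ∈ X)
    (hΨ : Formula.know E (Ψ.imp (Formula.blame E Ψ)) ∈ X) :
    Formula.know (D ∪ E) ((ψ.or Ψ).imp (Formula.blame (D ∪ E) (ψ.or Ψ))) ∈ X := by
  by_cases hκ : Formula.kbar (D ∪ E) (Formula.blame (D ∪ E) (ψ.or Ψ)) ∈ X
  · exact hX.know_fair_of_kbar_blame hκ
  rw [hX.kbar_mem_iff, not_not] at hκ
  rw [hX.know_mem_iff]
  intro Y hY hXY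
  rw [hY.imp_mem_iff]
  intro hor
  refine absurd ?_ (hY.neg_mem_iff.1 (hXY _ hκ))
  have hψY := ((hXY.mono hX Set.subset_union_left).kbar_mem_iff hX hY).1 hψ
  have hΨY := ((hXY.mono hX Set.subset_union_right).know_mem_iff hX hY).1 hΨ
  by_cases hE : Formula.kbar E (Formula.blame E Ψ) ∈ Y
  · exact hY.mp_mem (hY.mp_mem (hY.mem_of_provable (.jointResp hDE))
      (hY.and_mem_iff.2 ⟨hψY, hE⟩)) hor
  -- Now `E` knows `¬Ψ`, so `ψ` is known to cause `ψ ∨ Ψ`, and `D` is to blame for `ψ`.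
  rw [hY.kbar_mem_iff, not_not] at hE
  have hnΨ : ∀ Z, MaxCons Z → KSucc E Y Z → Ψ ∉ Z := fun Z hZ hYZ hΨZ =>
    hZ.neg_mem_iff.1 (hYZ _ hE) (hZ.mp_mem (hYZ _ hΨY) hΨZ)
  have hψ' : ψ ∈ Y := (hY.or_mem_iff.1 hor).resolve_right (hnΨ Y hY hY.kSucc_refl)
  have hcause : Formula.know (D ∪ E) ((ψ.or Ψ).imp ψ) ∈ Y := by
    rw [hY.know_mem_iff]
    intro Z hZ hYZ
    rw [hZ.imp_mem_iff, hZ.or_mem_iff]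
    exact fun h => h.resolve_right (hnΨ Z hZ (hYZ.mono hY Set.subset_union_right))
  exact hY.blame_mem_of_know_imp hcause
    (hY.blame_mem_of_subset Set.subset_union_left (hY.blame_mem_of_kbar_blame hψY hψ')) hor

theorem exists_know_fair_foldr_or (hX : MaxCons X) {D : Formula A Prp → Set A} :
    ∀ l : List (Formula A Prp), (∀ ψ ∈ l, Formula.kbar (D ψ) (Formula.blame (D ψ) ψ) ∈ X) →
      l.Pairwise (Disjoint on D) →
      ∃ E : Set A, (∀ a ∈ E, ∃ ψ ∈ l, a ∈ D ψ) ∧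
        Formula.know E ((l.foldr Formula.or .bot).imp
          (Formula.blame E (l.foldr Formula.or .bot))) ∈ X
  | [], _, _ => ⟨∅, by simp, hX.mem_of_provable (.nec (.taut fun v => by simp [evalF]))⟩
  | ψ :: l, hl, hpw => by
    obtain ⟨E, hE, hK⟩ := exists_know_fair_foldr_or hX l
      (fun χ hχ => hl χ (List.mem_cons_of_mem ψ hχ)) hpw.of_cons
    refine ⟨D ψ ∪ E, ?_, hX.know_fair_or ?_ (hl ψ List.mem_cons_self) hK⟩
    · rintro a (ha | ha)
      · exact ⟨ψ, List.mem_cons_self, ha⟩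
      · obtain ⟨χ, hχ, ha⟩ := hE a ha
        exact ⟨χ, List.mem_cons_of_mem ψ hχ, ha⟩
    · rw [Set.disjoint_right]
      intro a haE haψ
      obtain ⟨χ, hχ, haχ⟩ := hE a haE
      exact Set.disjoint_left.1 (List.rel_of_pairwise_cons hpw hχ) haψ haχ

theorem exists_kSucc_avoiding (hX : MaxCons X) (hφ : φ ∈ X) (hBφ : Formula.blame C φ ∉ X)
    {S : Set (Formula A Prp)} {D : Formula A Prp → Set A} (hDC : ∀ ψ ∈ S, D ψ ⊆ C)
    (hD : ∀ ψ ∈ S, Formula.kbar (D ψ) (Formula.blame (D ψ) ψ) ∈ X)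
    (hS : S.PairwiseDisjoint D) :
    ∃ Y, MaxCons Y ∧ KSucc C X Y ∧ φ ∈ Y ∧ ∀ ψ ∈ S, ψ.neg ∈ Y := by
  suffices hcons : Consistent (insert φ {χ | Formula.know C χ ∈ X} ∪ Formula.neg '' S) by
    obtain ⟨Y, hsub, hY⟩ := hcons.exists_maxCons_superset
    exact ⟨Y, hY, fun χ hχ => hsub (Or.inl (Or.inr hχ)), hsub (Or.inl (Or.inl rfl)),
      fun ψ hψ => hsub (Or.inr ⟨ψ, hψ, rfl⟩)⟩
  intro hbot
  obtain ⟨l, hnd, hlS, hl⟩ := hbot.exists_foldr_or_of_union_neg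
  have hφΨ := hX.know_mem_of_provableFrom hl.deduction
  obtain ⟨E, hE, hEΨ⟩ := hX.exists_know_fair_foldr_or l (fun ψ hψ => hD ψ (hlS ψ hψ))
    (hnd.pairwise_of_set_pairwise (hS.subset hlS))
  have hEC : E ⊆ C := fun a ha =>
    let ⟨ψ, hψ, haψ⟩ := hE a ha
    hDC ψ (hlS ψ hψ) haψ
  have hΨ := hX.mp_mem (hX.mem_of_know_mem hφΨ) hφ
  have hBΨ := hX.blame_mem_of_subset hEC (hX.mp_mem (hX.mem_of_know_mem hEΨ) hΨ)
  exact hBφ (hX.blame_mem_of_know_imp hφΨ hBΨ hφ)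

theorem exists_kSucc_preventing (hX : MaxCons X) (hφ : φ ∈ X) (hBφ : Formula.blame C φ ∉ X)
    (δ : A → Formula A Prp) :
    ∃ Y, MaxCons Y ∧ KSucc C X Y ∧ φ ∈ Y ∧
      ∀ D ⊆ C, ∀ ψ, Formula.kbar D (Formula.blame D ψ) ∈ X → (∀ a ∈ D, δ a = ψ) →
        ψ.neg ∈ Y := by
  have hS : ∀ ψ ∈ {ψ | ∃ D ⊆ C, Formula.kbar D (Formula.blame D ψ) ∈ X ∧ ∀ a ∈ D, δ a = ψ},
      ∃ D ⊆ C, Formula.kbar D (Formula.blame D ψ) ∈ X ∧ ∀ a ∈ D, δ a = ψ := fun _ hψ => hψ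
  choose! D hDC hD hδ using hS
  obtain ⟨Y, hY, hXY, hφY, hSY⟩ := hX.exists_kSucc_avoiding hφ hBφ hDC hD
    fun ψ hψ χ hχ hne => Set.disjoint_left.2 fun a haψ haχ =>
      hne ((hδ ψ hψ a haψ).symm.trans (hδ χ hχ a haχ))
  exact ⟨Y, hY, hXY, hφY, fun D' hD'C ψ hψ hδψ => hSY ψ ⟨D', hD'C, hψ, hδψ⟩⟩

end MaxCons

theorem KSucc.neg_mem_of_kbar_blame {X Y : Set (Formula A Prp)} {C D : Set A}
    {δ : A → Formula A Prp} {ψ : Formula A Prp} (hX : MaxCons X) (hY : MaxCons Y)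
    (hXY : KSucc C X Y) (hδ : ∀ a ∉ C, δ a = Formula.top)
    (hprev : ∀ D ⊆ C, ∀ ψ, Formula.kbar D (Formula.blame D ψ) ∈ X → (∀ a ∈ D, δ a = ψ) →
      ψ.neg ∈ Y)
    (hψ : Formula.kbar D (Formula.blame D ψ) ∈ Y) (hδψ : ∀ a ∈ D, δ a = ψ) : ψ.neg ∈ Y := by
  by_cases hDC : D ⊆ C
  · exact hprev D hDC ψ (((hXY.mono hX hDC).kbar_mem_iff hX hY).2 hψ) hδψ
  obtain ⟨a, haD, haC⟩ := Set.not_subset.1 hDC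
  rw [← hδψ a haD, hδ a haC] at hψ
  exact absurd (hY.mem_of_provable (.nec .blameTop)) (hY.kbar_mem_iff.1 hψ)

theorem ValidChain.maxCons_getLastD {X : Set (Formula A Prp)} (hX : MaxCons X) :
    ∀ {l : List (Set A × Set (Formula A Prp))}, ValidChain X l →
      MaxCons ((l.map Prod.snd).getLastD X)
  | [], _ => hX
  | (_, _) :: _, ⟨hY, _, hl⟩ => by
    rw [List.map_cons, List.getLastD_cons]
    exact ValidChain.maxCons_getLastD hY hl

theorem ValidChain.append_singleton {X Y : Set (Formula A Prp)} {C : Set A} :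
    ∀ {l : List (Set A × Set (Formula A Prp))}, ValidChain X l → MaxCons Y →
      KSucc C ((l.map Prod.snd).getLastD X) Y → ValidChain X (l ++ [(C, Y)])
  | [], _, hY, hXY => ⟨hY, hXY, trivial⟩
  | (_, _) :: _, ⟨hZ, hXZ, hl⟩, hY, hXY => by
    rw [List.map_cons, List.getLastD_cons] at hXY
    exact ⟨hZ, hXZ, append_singleton hl hY hXY⟩

namespace COutcome

variable {X₀ : Set (Formula A Prp)}

def snoc (ω : COutcome X₀) (C : Set A) (Y : Set (Formula A Prp)) (hY : MaxCons Y)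
    (h : KSucc C (hd X₀ ω) Y) : COutcome X₀ :=
  ⟨ω.1 ++ [(C, Y)], ω.2.append_singleton hY h⟩

variable (ω : COutcome X₀) {C : Set A} {Y : Set (Formula A Prp)} (hY : MaxCons Y)
  (h : KSucc C (hd X₀ ω) Y)

theorem hd_snoc : hd X₀ (ω.snoc C Y hY h) = Y := by
  simp [hd, snoc]

theorem simOutC_snoc : simOutC X₀ C ω (ω.snoc C Y hY h) := fun _ ha =>
  ⟨ω.1, [], [(C, Y)], (List.append_nil _).symm, rfl, by simp, by simpa using ha⟩

end COutcome

/-- Existence of preventing extensions in the canonical game: for any play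
(α, δ, ω) ∈ P, any action profile s ∈ Δ^C, and any formula with
¬(φ → B_C φ) ∈ hd(ω), there is a play (α', δ', ω') ∈ P such that α ∼_C α',
s =_C δ', and φ ∈ hd(ω'). -/
theorem b_child_exists {A Prp : Type} (X₀ : Set (Formula A Prp)) (hX₀ : MaxCons X₀)
    (α : CanonI X₀) (δ : A → Formula A Prp) (ω : COutcome X₀)
    (hP : (α, δ, ω) ∈ CanonP X₀) (C : Set A) (s : C → Formula A Prp)
    (φ : Formula A Prp)
    (hφ : Formula.neg (Formula.imp φ (Formula.blame C φ)) ∈ hd X₀ ω) :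
    ∃ (α' : CanonI X₀) (δ' : A → Formula A Prp) (ω' : COutcome X₀),
      (α', δ', ω') ∈ CanonP X₀ ∧ simIC X₀ C α α' ∧
      (∀ a : C, s a = δ' a.1) ∧ φ ∈ hd X₀ ω' := by
  classical
  have hX : MaxCons (hd X₀ ω) := ω.2.maxCons_getLastD hX₀
  rw [hX.neg_mem_iff, hX.imp_mem_iff, Classical.not_imp] at hφ
  let δ' : A → Formula A Prp := fun a => if h : a ∈ C then s ⟨a, h⟩ else Formula.top
  obtain ⟨Y, hY, hXY, hφY, hprev⟩ := hX.exists_kSucc_preventing hφ.1 hφ.2 δ'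
  refine ⟨Quot.mk _ (ω.snoc C Y hY hXY), δ', ω.snoc C Y hY hXY, ⟨rfl, ?_⟩,
    ⟨ω, _, hP.1, rfl, ω.simOutC_snoc hY hXY⟩, fun a => by simp only [δ', dif_pos a.2], ?_⟩
  · rw [COutcome.hd_snoc]
    exact fun D ψ => hXY.neg_mem_of_kbar_blame hX hY (fun a ha => dif_neg ha) hprev
  · rwa [COutcome.hd_snoc]
end

section
/- Every outcome of the canonical game occurs in some play: For any maximal consistent set X_0 and any outcome ω ∈ Ω of the canonical game G(X_0), there is an initial state α ∈ I and a complete action profile δ ∈ Δ^A such that (α, δ, ω) ∈ P. -/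
lemma negK_bot {A Prp : Type} {X : Set (Formula A Prp)} {φ : Formula A Prp}
    (h : Formula.neg φ ∈ X) (hp : Provable φ) : ProvableFrom X Formula.bot := by
  have t : Provable (Formula.imp (Formula.neg φ) (Formula.imp φ Formula.bot)) :=
    Provable.taut (fun v hn hφ => hn hφ)
  exact ProvableFrom.mp (ProvableFrom.mp (ProvableFrom.thm t) (ProvableFrom.hyp h))
    (ProvableFrom.thm hp)

lemma hd_maxCons {A Prp : Type} (X₀ : Set (Formula A Prp)) :
    ∀ (l : List (Set A × Set (Formula A Prp))) {X : Set (Formula A Prp)},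
      MaxCons X → ValidChain X l → MaxCons ((l.map Prod.snd).getLastD X)
  | [], _, hX, _ => hX
  | (C, Y) :: rest, X, _, hvc => by
      obtain ⟨hY, _, hrest⟩ := hvc
      have := hd_maxCons X₀ rest hY hrest
      rwa [List.map_cons, List.getLastD_cons]

/-- Every outcome of the canonical game occurs in some play: for any outcome ω,
there is an initial state α and a complete action profile δ with (α, δ, ω) ∈ P. -/
theorem delta_exists {A Prp : Type} (X₀ : Set (Formula A Prp)) (hX₀ : MaxCons X₀)
    (ω : COutcome X₀) :
    ∃ (α : CanonI X₀) (δ : A → Formula A Prp), (α, δ, ω) ∈ CanonP X₀ := by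
  have hmc : MaxCons (hd X₀ ω) := hd_maxCons X₀ ω.1 hX₀ ω.2
  refine ⟨Quot.mk _ ω, fun _ => Formula.top, rfl, ?_⟩
  intro C ψ hmem hδ
  exfalso
  apply hmc.1
  rcases Set.eq_empty_or_nonempty C with hC | ⟨a, ha⟩
  · subst hC
    exact negK_bot hmem (Provable.nec Provable.noneBlame)
  · have : ψ = Formula.top := (hδ a ha).symm
    subst this
    exact negK_bot hmem (Provable.nec Provable.blameTop)
end
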